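/- arXiv:2605.23256 — 3 statements merged into one kernel-verified Lean document; each statement's English description precedes it below -/
import Mathlib

section
/- Let α > 0 and let T be a compact linear operator on the Hilbert space PH²_α. Then the Berezin transform of T vanishes at infinity: T̃(z) = ⟨T k_{ph,α}(·,z), k_{ph,α}(·,z)⟩ → 0 as |z| → ∞. -/
open MeasureTheory Metric Complex Filter
open scoped ENNReal Real

noncomputable instance (n : ℕ) : MeasurableSpace (EuclideanSpace ℂ (Fin n)) := borel _
instance (n : ℕ) : BorelSpace (EuclideanSpace ℂ (Fin n)) := ⟨rfl⟩

def Pluriharmonic {n : ℕ} (f : EuclideanSpace ℂ (Fin n) → ℂ) : Prop :=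
  ∃ g h : EuclideanSpace ℂ (Fin n) → ℂ, Differentiable ℂ g ∧ Differentiable ℂ h ∧
    ∀ z, f z = g z + (starRingEnd ℂ) (h z)

/-- The Gaussian measure `γ_α = (απ)^{-n} e^{-|z|²/α} dA(z)` on `ℂⁿ`. -/
noncomputable def gaussianFock (n : ℕ) (α : ℝ) : Measure (EuclideanSpace ℂ (Fin n)) :=
  volume.withDensity fun z => ENNReal.ofReal (Real.exp (-‖z‖ ^ 2 / α) / (α * π) ^ n)

lemma Pluriharmonic.zero {n : ℕ} : Pluriharmonic (0 : EuclideanSpace ℂ (Fin n) → ℂ) :=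
  ⟨0, 0, differentiable_const 0, differentiable_const 0, by simp⟩

lemma Pluriharmonic.add {n : ℕ} {f₁ f₂ : EuclideanSpace ℂ (Fin n) → ℂ}
    (h₁ : Pluriharmonic f₁) (h₂ : Pluriharmonic f₂) : Pluriharmonic (f₁ + f₂) := by
  obtain ⟨g₁, k₁, dg₁, dk₁, e₁⟩ := h₁
  obtain ⟨g₂, k₂, dg₂, dk₂, e₂⟩ := h₂
  exact ⟨g₁ + g₂, k₁ + k₂, dg₁.add dg₂, dk₁.add dk₂, fun z => by
    simp [e₁ z, e₂ z, map_add]; ring⟩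

lemma Pluriharmonic.smul {n : ℕ} (c : ℂ) {f : EuclideanSpace ℂ (Fin n) → ℂ}
    (hf : Pluriharmonic f) : Pluriharmonic (c • f) := by
  obtain ⟨g, k, dg, dk, e⟩ := hf
  refine ⟨c • g, (starRingEnd ℂ c) • k, dg.const_smul c, ?_, fun z => ?_⟩
  · simpa [Pi.smul_def] using dk.const_smul ((starRingEnd ℂ) c)
  · simp [e z, map_mul, Complex.conj_conj]
    ring

/-- `PH²_α`: the subspace of `L²(γ_α)` of (classes of) pluriharmonic functions. -/
noncomputable def PHsub (n : ℕ) (α : ℝ) : Submodule ℂ (Lp ℂ 2 (gaussianFock n α)) where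
  carrier := {f | ∃ g, Pluriharmonic g ∧ ⇑f =ᵐ[gaussianFock n α] g}
  zero_mem' := ⟨0, Pluriharmonic.zero, Lp.coeFn_zero ℂ 2 (gaussianFock n α)⟩
  add_mem' := by
    rintro a b ⟨ga, hga, ea⟩ ⟨gb, hgb, eb⟩
    exact ⟨ga + gb, hga.add hgb, (Lp.coeFn_add a b).trans (ea.add eb)⟩
  smul_mem' := by
    rintro c a ⟨ga, hga, ea⟩
    exact ⟨c • ga, hga.smul c, (Lp.coeFn_smul c a).trans (ea.const_smul c)⟩

/-- The pluriharmonic Fock kernel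
`K_{ph,α}(z,w) = exp(⟨z,w⟩/α) + exp(⟨w,z⟩/α) − 1`, `⟨z,w⟩ = ∑ z_j conj w_j`. -/
noncomputable def Kph (n : ℕ) (α : ℝ) (z w : EuclideanSpace ℂ (Fin n)) : ℂ :=
  Complex.exp ((∑ j, z j * (starRingEnd ℂ) (w j)) / (α : ℂ)) +
    Complex.exp ((∑ j, w j * (starRingEnd ℂ) (z j)) / (α : ℂ)) - 1

/-!
The normalized kernels `k_z` are bounded in `L²(γ_α)` and `∫ |k_z| dγ_α = O(e^{-|z|²/4α})`, so
`⟪g, k_z⟫ → 0` for every bounded `g`; bounded functions are dense, hence `k_z → 0` weakly in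
`L²(γ_α)`. By Hahn–Banach and Riesz every functional on `PH²_α` is the inner product with some
element of `L²(γ_α)`, so `k_z → 0` weakly in `PH²_α` as well. A compact operator maps a bounded
weakly null family to a norm null one: every cluster point of `T k_z` in the compact closure of its
range is annihilated by all functionals. Finally `|T̃(z)| ≤ ‖T k_z‖ ‖k_z‖`.
-/

open Topology

section CompactOperator

variable {𝕜 E F : Type*} [RCLike 𝕜] [NormedAddCommGroup E] [NormedSpace 𝕜 E]
  [NormedAddCommGroup F] [NormedSpace 𝕜 F]

theorem IsCompactOperator.tendsto_nhds_zero_of_forall_dual {T : E →L[𝕜] F}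
    (hT : IsCompactOperator T) {ι : Type*} {l : Filter ι} {x : ι → E} {C : ℝ}
    (hx : ∀ i, ‖x i‖ ≤ C) (hweak : ∀ φ : StrongDual 𝕜 E, Tendsto (fun i => φ (x i)) l (𝓝 0)) :
    Tendsto (fun i => T (x i)) l (𝓝 0) := by
  have hK : IsCompact (closure (T '' Set.range x)) :=
    hT.isCompact_closure_image_of_bounded
      (isBounded_iff_forall_norm_le.2 ⟨C, by rintro _ ⟨i, rfl⟩; exact hx i⟩)
  refine hK.tendsto_nhds_of_unique_mapClusterPt
    (.of_forall fun i => subset_closure ⟨x i, ⟨i, rfl⟩, rfl⟩) fun y _ hy => ?_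
  refine SeparatingDual.eq_zero_of_forall_dual_eq_zero (R := 𝕜) fun ψ => ?_
  have hψy : MapClusterPt (ψ y) l (fun i => ψ (T (x i))) :=
    hy.continuousAt_comp ψ.continuous.continuousAt
  simpa using eq_of_nhds_neBot (hψy.neBot.mono (inf_le_inf_left _ (hweak (ψ.comp T))))

end CompactOperator

section Weak

variable {𝕜 E : Type*} [RCLike 𝕜] [NormedAddCommGroup E] [InnerProductSpace 𝕜 E]

theorem tendsto_inner_zero_of_dense {ι : Type*} {l : Filter ι} {x : ι → E} {C : ℝ}
    (hx : ∀ i, ‖x i‖ ≤ C) {D : Set E} (hD : Dense D)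
    (h : ∀ m ∈ D, Tendsto (fun i => inner 𝕜 m (x i)) l (𝓝 0)) (m : E) :
    Tendsto (fun i => inner 𝕜 m (x i)) l (𝓝 0) := by
  have hequi : Equicontinuous ((↑) ∘ fun i => innerSL 𝕜 (x i)) :=
    ((NormedSpace.equicontinuous_TFAE fun i => innerSL 𝕜 (x i)).out 1 5).2
      (⟨C, fun i => (innerSL_apply_norm 𝕜 (x i)).trans_le (hx i)⟩ :
        ∃ C, ∀ i, ‖innerSL 𝕜 (x i)‖ ≤ C)
  have hclosed := hequi.isClosed_setOfPred_tendsto (l := l) (f := fun _ => (0 : 𝕜)) continuous_const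
  have hsymm : ∀ m, Tendsto (fun i => inner 𝕜 m (x i)) l (𝓝 0) ↔
      Tendsto (fun i => inner 𝕜 (x i) m) l (𝓝 0) := by
    intro m
    rw [tendsto_zero_iff_norm_tendsto_zero,
      tendsto_zero_iff_norm_tendsto_zero (f := fun i => inner 𝕜 (x i) m)]
    simp_rw [norm_inner_symm m]
  rw [hsymm]
  exact hclosed.closure_subset_iff.2 (fun m hm => (hsymm m).1 (h m hm))
    (hD.closure_eq ▸ Set.mem_univ m)

end Weak

theorem Submodule.exists_dual_apply_eq_inner {𝕜 E : Type*} [RCLike 𝕜] [NormedAddCommGroup E]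
    [InnerProductSpace 𝕜 E] [CompleteSpace E] {p : Submodule 𝕜 E} (φ : StrongDual 𝕜 p) :
    ∃ m : E, ∀ v : p, φ v = inner 𝕜 m (v : E) := by
  obtain ⟨g, hg, -⟩ := exists_extension_norm_eq p φ
  obtain ⟨m, rfl⟩ := (InnerProductSpace.toDual 𝕜 E).surjective g
  exact ⟨m, fun v => by rw [← hg v, InnerProductSpace.toDual_apply_apply]⟩

section Gaussian

variable {V : Type*} [NormedAddCommGroup V] [InnerProductSpace ℝ V] [FiniteDimensional ℝ V]
  [MeasurableSpace V] [BorelSpace V]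

theorem integrable_rexp_neg_mul_sq_norm_add {b : ℝ} (hb : 0 < b) (c : ℝ) (v : V) :
    Integrable fun w : V => Real.exp (-b * ‖w‖ ^ 2 + c * inner ℝ v w) := by
  refine (GaussianFourier.integrable_cexp_neg_mul_sq_norm_add (b := b) (by simpa) c v).norm.congr
    (.of_forall fun w => ?_)
  simp only [Complex.norm_exp]
  norm_cast

theorem integral_rexp_neg_mul_sq_norm_add {b : ℝ} (hb : 0 < b) (c : ℝ) (v : V) :
    ∫ w : V, Real.exp (-b * ‖w‖ ^ 2 + c * inner ℝ v w) =
      (π / b) ^ (Module.finrank ℝ V / 2 : ℝ) * Real.exp (c ^ 2 * ‖v‖ ^ 2 / (4 * b)) := by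
  have hsq : ∀ w : V, -b * ‖w‖ ^ 2 + c * inner ℝ v w =
      c ^ 2 * ‖v‖ ^ 2 / (4 * b) + -b * ‖w - (c / (2 * b)) • v‖ ^ 2 := by
    intro w
    rw [norm_sub_sq_real, inner_smul_right, norm_smul, real_inner_comm, Real.norm_eq_abs,
      mul_pow, sq_abs]
    field_simp
    ring
  simp_rw [hsq, Real.exp_add, integral_const_mul,
    integral_sub_right_eq_self (fun w => Real.exp (-b * ‖w‖ ^ 2)),
    GaussianFourier.integral_rexp_neg_mul_sq_norm hb]
  ring

end Gaussian

section GaussianFock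

variable {n : ℕ} {α : ℝ}

theorem finrank_real_euclideanSpace_complex :
    Module.finrank ℝ (EuclideanSpace ℂ (Fin n)) = 2 * n := by
  rw [finrank_real_of_complex, finrank_euclideanSpace_fin]

theorem gaussianFock_density_mul_exp_inner (hα : 0 < α) (c : ℝ)
    (z w : EuclideanSpace ℂ (Fin n)) :
    (ENNReal.ofReal (Real.exp (-‖w‖ ^ 2 / α) / (α * π) ^ n)).toReal * Real.exp (c * inner ℝ z w)
      = ((α * π) ^ n)⁻¹ * Real.exp (-(1 / α) * ‖w‖ ^ 2 + c * inner ℝ z w) := by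
  rw [ENNReal.toReal_ofReal (by positivity), Real.exp_add]
  ring_nf

theorem integrable_exp_inner_gaussianFock (hα : 0 < α) (c : ℝ) (z : EuclideanSpace ℂ (Fin n)) :
    Integrable (fun w => Real.exp (c * inner ℝ z w)) (gaussianFock n α) := by
  rw [gaussianFock, integrable_withDensity_iff_integrable_smul' (by fun_prop)
    (.of_forall fun _ => ENNReal.ofReal_lt_top)]
  simp_rw [smul_eq_mul, gaussianFock_density_mul_exp_inner hα]
  exact (integrable_rexp_neg_mul_sq_norm_add (by positivity) c z).const_mul _

theorem integral_exp_inner_gaussianFock (hα : 0 < α) (c : ℝ) (z : EuclideanSpace ℂ (Fin n)) :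
    ∫ w, Real.exp (c * inner ℝ z w) ∂gaussianFock n α = Real.exp (c ^ 2 * α * ‖z‖ ^ 2 / 4) := by
  rw [gaussianFock, integral_withDensity_eq_integral_toReal_smul (by fun_prop)
    (.of_forall fun _ => ENNReal.ofReal_lt_top)]
  simp_rw [smul_eq_mul, gaussianFock_density_mul_exp_inner hα, integral_const_mul,
    integral_rexp_neg_mul_sq_norm_add (one_div_pos.2 hα), finrank_real_euclideanSpace_complex]
  have hpow : (π / (1 / α)) ^ ((↑(2 * n) : ℝ) / 2) = (α * π) ^ n := by
    rw [Nat.cast_mul, Nat.cast_two, mul_div_cancel_left₀ _ two_ne_zero, Real.rpow_natCast,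
      div_div_eq_mul_div, div_one, mul_comm]
  rw [hpow, inv_mul_cancel_left₀ (by positivity)]
  congr 1
  field_simp

theorem isProbabilityMeasure_gaussianFock (hα : 0 < α) :
    IsProbabilityMeasure (gaussianFock n α) := by
  have h := integral_exp_inner_gaussianFock (n := n) hα 0 0
  simp only [zero_mul, zero_pow two_ne_zero, zero_div, Real.exp_zero, integral_const,
    smul_eq_mul, mul_one, measureReal_def] at h
  exact ⟨(ENNReal.toReal_eq_one_iff _).1 h⟩

end GaussianFock

section L2

variable {𝕜 β E : Type*} [RCLike 𝕜] [NormedAddCommGroup E] [InnerProductSpace 𝕜 E]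
  [MeasurableSpace β] {μ : Measure β}

theorem MeasureTheory.Lp.norm_sq_eq_integral_norm_sq (f : Lp E 2 μ) :
    ‖f‖ ^ 2 = ∫ a, ‖f a‖ ^ 2 ∂μ := by
  rw [Lp.norm_def, (Lp.memLp f).eLpNorm_eq_integral_rpow_norm two_ne_zero ENNReal.ofNat_ne_top,
    ENNReal.toReal_ofReal (by positivity), ENNReal.toReal_ofNat, ← Real.rpow_natCast,
    ← Real.rpow_mul (integral_nonneg fun a => by positivity)]
  norm_num

theorem MeasureTheory.L2.norm_inner_le_mul_integral_norm [IsFiniteMeasure μ] (f g : Lp E 2 μ)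
    {B : ℝ} (hg : ∀ᵐ a ∂μ, ‖g a‖ ≤ B) :
    ‖inner 𝕜 g f‖ ≤ B * ∫ a, ‖f a‖ ∂μ := by
  rw [L2.inner_def, ← integral_const_mul]
  refine norm_integral_le_of_norm_le (((Lp.memLp f).integrable one_le_two).norm.const_mul B) ?_
  filter_upwards [hg] with a ha
  exact (norm_inner_le_norm _ _).trans (mul_le_mul_of_nonneg_right ha (norm_nonneg _))

end L2

section Kernel

variable {n : ℕ} {α : ℝ}

theorem Kph_eq_exp_inner (z w : EuclideanSpace ℂ (Fin n)) :
    Kph n α w z = Complex.exp (inner ℂ z w / α) + Complex.exp (inner ℂ w z / α) - 1 := by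
  simp only [Kph, PiLp.inner_apply, RCLike.inner_apply]

theorem EuclideanSpace.re_inner_complex (z w : EuclideanSpace ℂ (Fin n)) :
    (inner ℂ z w).re = inner ℝ z w := by
  simp only [PiLp.inner_apply, Complex.re_sum, RCLike.inner_apply, Complex.inner]

theorem norm_Kph_le (z w : EuclideanSpace ℂ (Fin n)) :
    ‖Kph n α w z‖ ≤ 2 * Real.exp (α⁻¹ * inner ℝ z w) + 1 := by
  have hexp : ∀ u : ℂ, u.re = inner ℝ z w →
      ‖Complex.exp (u / α)‖ = Real.exp (α⁻¹ * inner ℝ z w) :=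
    fun u hu => by rw [Complex.norm_exp, Complex.div_ofReal_re, hu, inv_mul_eq_div]
  rw [Kph_eq_exp_inner]
  calc _ ≤ ‖Complex.exp (inner ℂ z w / α)‖ + ‖Complex.exp (inner ℂ w z / α)‖ + ‖(1 : ℂ)‖ :=
        (norm_sub_le _ _).trans (add_le_add_left (norm_add_le _ _) _)
    _ = 2 * Real.exp (α⁻¹ * inner ℝ z w) + 1 := by
        rw [hexp _ (EuclideanSpace.re_inner_complex z w),
          hexp _ (by rw [← inner_conj_symm, Complex.conj_re, EuclideanSpace.re_inner_complex]),
          norm_one]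
        ring

end Kernel

section NormalizedKernel

variable {n : ℕ} {α : ℝ}

noncomputable def normalizedKph (n : ℕ) (α : ℝ) (z w : EuclideanSpace ℂ (Fin n)) : ℂ :=
  Kph n α w z / (Real.sqrt (2 * Real.exp (‖z‖ ^ 2 / α) - 1) : ℂ)

theorem norm_normalizedKph_le (z w : EuclideanSpace ℂ (Fin n)) :
    ‖normalizedKph n α z w‖ ≤
      (2 * Real.exp (α⁻¹ * inner ℝ z w) + 1) / Real.sqrt (2 * Real.exp (‖z‖ ^ 2 / α) - 1) := by
  rw [normalizedKph, norm_div, Complex.norm_real, Real.norm_of_nonneg (Real.sqrt_nonneg _)]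
  exact div_le_div_of_nonneg_right (norm_Kph_le z w) (Real.sqrt_nonneg _)

theorem Real.exp_le_two_mul_exp_sub_one {x : ℝ} (hx : 0 ≤ x) :
    Real.exp x ≤ 2 * Real.exp x - 1 := by
  linarith [Real.one_le_exp hx]

theorem norm_le_four_of_ae_eq_normalizedKph (hα : 0 < α) {z : EuclideanSpace ℂ (Fin n)}
    {f : Lp ℂ 2 (gaussianFock n α)} (hf : ⇑f =ᵐ[gaussianFock n α] normalizedKph n α z) :
    ‖f‖ ≤ 4 := by
  have := isProbabilityMeasure_gaussianFock (n := n) hα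
  set E := Real.exp (‖z‖ ^ 2 / α)
  have hE : E ≤ 2 * E - 1 := Real.exp_le_two_mul_exp_sub_one (by positivity)
  have hint : Integrable (fun w => (8 * Real.exp (2 / α * inner ℝ z w) + 2) / (2 * E - 1))
      (gaussianFock n α) :=
    (((integrable_exp_inner_gaussianFock hα _ z).const_mul 8).add (integrable_const 2)).div_const _
  have hpointwise : ∀ᵐ w ∂gaussianFock n α, ‖f w‖ ^ 2 ≤
      (8 * Real.exp (2 / α * inner ℝ z w) + 2) / (2 * E - 1) := by
    filter_upwards [hf] with w hw
    have hsq : Real.exp (2 / α * inner ℝ z w) = Real.exp (α⁻¹ * inner ℝ z w) ^ 2 := by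
      rw [← Real.exp_nat_mul]; ring_nf
    calc ‖f w‖ ^ 2 ≤ ((2 * Real.exp (α⁻¹ * inner ℝ z w) + 1) / Real.sqrt (2 * E - 1)) ^ 2 :=
          pow_le_pow_left₀ (norm_nonneg _) (hw ▸ norm_normalizedKph_le z w) 2
      _ = (2 * Real.exp (α⁻¹ * inner ℝ z w) + 1) ^ 2 / (2 * E - 1) := by
          rw [div_pow, Real.sq_sqrt (by linarith)]
      _ ≤ _ := by
          rw [hsq]
          exact div_le_div_of_nonneg_right
            (by nlinarith [sq_nonneg (2 * Real.exp (α⁻¹ * inner ℝ z w) - 1)]) (by linarith)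
  have hbound : ∫ w, ‖f w‖ ^ 2 ∂gaussianFock n α ≤ 10 := by
    refine (integral_mono_of_nonneg (.of_forall fun _ => by positivity) hint hpointwise).trans ?_
    rw [integral_div, integral_add ((integrable_exp_inner_gaussianFock hα _ z).const_mul 8)
      (integrable_const 2), integral_const_mul, integral_exp_inner_gaussianFock hα,
      integral_const, probReal_univ, one_smul, div_le_iff₀ (by linarith)]
    have : (2 / α) ^ 2 * α * ‖z‖ ^ 2 / 4 = ‖z‖ ^ 2 / α := by field_simp; ring
    rw [this]
    linarith
  nlinarith [Lp.norm_sq_eq_integral_norm_sq f, norm_nonneg f]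

theorem integral_norm_le_of_ae_eq_normalizedKph (hα : 0 < α) {z : EuclideanSpace ℂ (Fin n)}
    {f : Lp ℂ 2 (gaussianFock n α)} (hf : ⇑f =ᵐ[gaussianFock n α] normalizedKph n α z) :
    ∫ w, ‖f w‖ ∂gaussianFock n α ≤
      2 * Real.exp (-(‖z‖ ^ 2 / α / 4)) + Real.exp (-(‖z‖ ^ 2 / α / 2)) := by
  have := isProbabilityMeasure_gaussianFock (n := n) hα
  set s := ‖z‖ ^ 2 / α
  set N := Real.sqrt (2 * Real.exp s - 1)
  have hN : Real.exp (s / 2) ≤ N := by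
    rw [Real.exp_half]
    exact Real.sqrt_le_sqrt (Real.exp_le_two_mul_exp_sub_one (by positivity))
  have hint :
      Integrable (fun w => (2 * Real.exp (α⁻¹ * inner ℝ z w) + 1) / N) (gaussianFock n α) :=
    (((integrable_exp_inner_gaussianFock hα _ z).const_mul 2).add (integrable_const 1)).div_const _
  calc ∫ w, ‖f w‖ ∂gaussianFock n α
      ≤ ∫ w, (2 * Real.exp (α⁻¹ * inner ℝ z w) + 1) / N ∂gaussianFock n α :=
        integral_mono_of_nonneg (.of_forall fun _ => norm_nonneg _) hint
          (hf.mono fun w hw => by simpa only [hw] using norm_normalizedKph_le z w)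
    _ = (2 * Real.exp (s / 4) + 1) / N := by
        rw [integral_div, integral_add ((integrable_exp_inner_gaussianFock hα _ z).const_mul 2)
          (integrable_const 1), integral_const_mul, integral_exp_inner_gaussianFock hα,
          integral_const, probReal_univ, one_smul]
        congr 4
        simp only [s]
        field_simp
    _ ≤ (2 * Real.exp (s / 4) + 1) / Real.exp (s / 2) :=
        div_le_div_of_nonneg_left (by positivity) (Real.exp_pos _) hN
    _ = 2 * Real.exp (-(s / 4)) + Real.exp (-(s / 2)) := by
        rw [add_div, mul_div_assoc, ← Real.exp_sub, one_div, ← Real.exp_neg]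
        ring_nf

end NormalizedKernel

section Limit

variable {n : ℕ} {α : ℝ}

theorem tendsto_sq_norm_div_atTop {E : Type*} [SeminormedAddCommGroup E] (hα : 0 < α) :
    Tendsto (fun z : E => ‖z‖ ^ 2 / α) (comap (‖·‖) atTop) atTop :=
  ((tendsto_pow_atTop two_ne_zero).comp tendsto_comap).atTop_div_const hα

theorem tendsto_inner_normalizedKph (hα : 0 < α)
    {f : EuclideanSpace ℂ (Fin n) → Lp ℂ 2 (gaussianFock n α)}
    (hf : ∀ z, ⇑(f z) =ᵐ[gaussianFock n α] normalizedKph n α z) (m : Lp ℂ 2 (gaussianFock n α)) :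
    Tendsto (fun z => inner ℂ m (f z)) (comap (‖·‖) atTop) (𝓝 0) := by
  have := isProbabilityMeasure_gaussianFock (n := n) hα
  refine tendsto_inner_zero_of_dense (fun z => norm_le_four_of_ae_eq_normalizedKph hα (hf z))
    (Lp.simpleFunc.dense ENNReal.ofNat_ne_top) (fun g hg => ?_) m
  obtain ⟨B, hB⟩ := (Lp.simpleFunc.toSimpleFunc ⟨g, hg⟩).exists_forall_norm_le
  have hgB : ∀ᵐ w ∂gaussianFock n α, ‖g w‖ ≤ B :=
    (Lp.simpleFunc.toSimpleFunc_eq_toFun ⟨g, hg⟩).mono fun w hw => hw ▸ hB w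
  have hdecay :
      Tendsto (fun t : ℝ => 2 * Real.exp (-(t / 4)) + Real.exp (-(t / 2))) atTop (𝓝 0) := by
    have hexp : ∀ c : ℝ, 0 < c → Tendsto (fun t : ℝ => Real.exp (-(t / c))) atTop (𝓝 0) :=
      fun c hc => Real.tendsto_exp_neg_atTop_nhds_zero.comp (tendsto_id.atTop_div_const hc)
    simpa using ((hexp 4 four_pos).const_mul 2).add (hexp 2 two_pos)
  refine squeeze_zero_norm (fun z => (L2.norm_inner_le_mul_integral_norm _ _ hgB).trans
    (mul_le_mul_of_nonneg_left (integral_norm_le_of_ae_eq_normalizedKph hα (hf z))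
      ((norm_nonneg _).trans (hB 0)))) ?_
  simpa using
    (hdecay.comp (tendsto_sq_norm_div_atTop (E := EuclideanSpace ℂ (Fin n)) hα)).const_mul B

end Limit

theorem berezinTransformOfCompactVanishes_general (n : ℕ) (α : ℝ) (hα : 0 < α)
    (T : PHsub n α →L[ℂ] PHsub n α) (hTcompact : IsCompactOperator T)
    (k : EuclideanSpace ℂ (Fin n) → PHsub n α)
    (hk : ∀ w, ⇑((k w : Lp ℂ 2 (gaussianFock n α))) =ᵐ[gaussianFock n α]
      (fun z => Kph n α z w / (Real.sqrt (2 * Real.exp (‖w‖ ^ 2 / α) - 1) : ℂ))) :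
    Filter.Tendsto (fun z : EuclideanSpace ℂ (Fin n) => (inner ℂ (T (k z)) (k z) : ℂ))
      (Filter.comap (fun z => ‖z‖) Filter.atTop) (nhds 0) := by
  have hbdd : ∀ z, ‖k z‖ ≤ 4 := fun z => norm_le_four_of_ae_eq_normalizedKph hα (hk z)
  have hweak : ∀ φ : StrongDual ℂ (PHsub n α),
      Tendsto (fun z => φ (k z)) (comap (fun z : EuclideanSpace ℂ (Fin n) => ‖z‖) atTop) (𝓝 0) := by
    intro φ
    obtain ⟨m, hm⟩ := Submodule.exists_dual_apply_eq_inner φ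
    simpa only [hm] using tendsto_inner_normalizedKph hα hk m
  have hTk := hTcompact.tendsto_nhds_zero_of_forall_dual hbdd hweak
  refine squeeze_zero_norm (fun z => (norm_inner_le_norm _ _).trans
    (mul_le_mul_of_nonneg_left (hbdd z) (norm_nonneg _))) ?_
  simpa using hTk.norm.mul_const 4

/-- Let `T` be a compact operator on `PH²_α` and let `k w ∈ PH²_α` be the
normalized reproducing kernel `k_{ph,α}(·,w) = K_{ph,α}(·,w) / √(2 e^{|w|²/α} − 1)`. Then the
Berezin transform `T̃(z) = ⟨T k_{ph,α}(·,z), k_{ph,α}(·,z)⟩` tends to `0` as `|z| → ∞`. -/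
theorem berezinTransformOfCompactVanishes (n : ℕ) (hn : 0 < n) (α : ℝ) (hα : 0 < α)
    (T : PHsub n α →L[ℂ] PHsub n α) (hTcompact : IsCompactOperator T)
    (k : EuclideanSpace ℂ (Fin n) → PHsub n α)
    (hk : ∀ w, ⇑((k w : Lp ℂ 2 (gaussianFock n α))) =ᵐ[gaussianFock n α]
      (fun z => Kph n α z w / (Real.sqrt (2 * Real.exp (‖w‖ ^ 2 / α) - 1) : ℂ))) :
    Filter.Tendsto (fun z : EuclideanSpace ℂ (Fin n) => (inner ℂ (T (k z)) (k z) : ℂ))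
      (Filter.comap (fun z => ‖z‖) Filter.atTop) (nhds 0) :=
  berezinTransformOfCompactVanishes_general n α hα T hTcompact k hk
end

section
/- Let α > 0. For every u ∈ ℂⁿ one has (1/(απ)^n) ∫_{ℂⁿ} |K_{ph,α}(z,u)|² e^{-|z|²/α} dA(z) = K_{ph,α}(u,u) = 2e^{|u|²/α} − 1. -/
open MeasureTheory Metric Complex Filter
open scoped ENNReal Real

open scoped InnerProductSpace ComplexConjugate

/-!
`K_{ph,α}(z,u) = 2 Re e^{⟨z,u⟩/α} − 1` is real, so `|K_{ph,α}(z,u)|² e^{-|z|²/α}` expands into six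
terms `e^{(⟨z,a⟩ + ⟨c,z⟩ − |z|²)/α}` with `a, c ∈ {0, u, 2u}`. The exponent is a Gaussian plus an
`ℝ`-linear, complex-valued functional `L`, and in orthonormal real coordinates
`∫ e^{-b|v|² + L v} = (π/b)^{d/2} e^{∑ L(eᵢ)²/(4b)}`; for `L = ⟨·,a⟩ + ⟨c,·⟩` and the basis
`(e_j, i e_j)` the sum of squares is `4⟨c,a⟩`, so each term integrates to `(απ)^n e^{⟨c,a⟩/α}`.
Only the term `|e^{⟨z,u⟩/α}|²` gives `e^{|u|²/α}`; the other five give `1 + 1 − 2 − 2 + 1`.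
-/

section LinearGaussian

variable {ι V : Type*} [Fintype ι] [NormedAddCommGroup V] [InnerProductSpace ℝ V]
  [MeasurableSpace V] [BorelSpace V]

noncomputable def OrthonormalBasis.coordMeasurableEquiv (B : OrthonormalBasis ι ℝ V) :
    (ι → ℝ) ≃ᵐ V :=
  (MeasurableEquiv.toLp 2 (ι → ℝ)).trans B.measurableEquiv.symm

lemma OrthonormalBasis.cexp_neg_mul_sq_norm_add_coordMeasurableEquiv (B : OrthonormalBasis ι ℝ V)
    (b : ℂ) (L : V →ₗ[ℝ] ℂ) (y : ι → ℝ) :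
    cexp (-b * ‖B.coordMeasurableEquiv y‖ ^ 2 + L (B.coordMeasurableEquiv y)) =
      cexp (-b * ∑ i, (y i : ℂ) ^ 2 + ∑ i, L (B i) * y i) := by
  have hv : B.coordMeasurableEquiv y = ∑ i, y i • B i := (B.sum_repr_symm _).symm
  have hnorm : (‖B.coordMeasurableEquiv y‖ : ℂ) ^ 2 = ∑ i, (y i : ℂ) ^ 2 := by
    rw [hv, B.sum_repr_symm, LinearIsometryEquiv.norm_map]
    exact_mod_cast EuclideanSpace.norm_sq_eq (WithLp.toLp 2 y) |>.trans (by simp)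
  rw [hnorm, hv, map_sum]
  simp [mul_comm]

variable [FiniteDimensional ℝ V] {b : ℂ}

lemma OrthonormalBasis.measurePreserving_coordMeasurableEquiv (B : OrthonormalBasis ι ℝ V) :
    MeasurePreserving B.coordMeasurableEquiv :=
  (PiLp.volume_preserving_toLp ι).trans B.measurePreserving_measurableEquiv.symm

theorem integrable_cexp_neg_mul_sq_norm_add_linearMap (hb : 0 < b.re) (L : V →ₗ[ℝ] ℂ) :
    Integrable fun v => cexp (-b * ‖v‖ ^ 2 + L v) := by
  let B := stdOrthonormalBasis ℝ V
  rw [← B.measurePreserving_coordMeasurableEquiv.integrable_comp_emb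
    B.coordMeasurableEquiv.measurableEmbedding]
  simpa only [Function.comp_def, B.cexp_neg_mul_sq_norm_add_coordMeasurableEquiv]
    using GaussianFourier.integrable_cexp_neg_mul_sum_add hb _

theorem integral_cexp_neg_mul_sq_norm_add_linearMap (B : OrthonormalBasis ι ℝ V) (hb : 0 < b.re)
    (L : V →ₗ[ℝ] ℂ) :
    ∫ v, cexp (-b * ‖v‖ ^ 2 + L v) =
      (π / b) ^ (Fintype.card ι / 2 : ℂ) * cexp ((∑ i, L (B i) ^ 2) / (4 * b)) := by
  rw [← B.measurePreserving_coordMeasurableEquiv.integral_comp',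
    ← GaussianFourier.integral_cexp_neg_mul_sum_add hb]
  simp only [B.cexp_neg_mul_sq_norm_add_coordMeasurableEquiv]

end LinearGaussian

section FockGaussian

variable {ι : Type*} [Fintype ι]

@[simps]
noncomputable def innerAddInner (a c : EuclideanSpace ℂ ι) : EuclideanSpace ℂ ι →ₗ[ℝ] ℂ where
  toFun z := ⟪a, z⟫_ℂ + ⟪z, c⟫_ℂ
  map_add' x y := by simp only [inner_add_left, inner_add_right]; ring
  map_smul' r x := by
    simp only [RCLike.real_smul_eq_coe_smul (K := ℂ), inner_smul_left, inner_smul_right,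
      RCLike.conj_ofReal, RingHom.id_apply, smul_eq_mul]
    ring

lemma sum_innerAddInner_pi_orthonormalBasisOneI_sq (a c : EuclideanSpace ℂ ι) :
    ∑ s, innerAddInner a c (Pi.orthonormalBasis (fun _ : ι => orthonormalBasisOneI) s) ^ 2 =
      4 * ⟪a, c⟫_ℂ := by
  classical
  simp only [Fintype.sum_sigma, Pi.orthonormalBasis_apply, innerAddInner_apply, Fin.sum_univ_two,
    coe_orthonormalBasisOneI, EuclideanSpace.inner_single_left, EuclideanSpace.inner_single_right]
  simp only [PiLp.inner_apply, RCLike.inner_apply, Finset.mul_sum]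
  refine Finset.sum_congr rfl fun j _ => ?_
  simp only [Matrix.cons_val_zero, Matrix.cons_val_one, map_one, conj_I]
  linear_combination ((starRingEnd ℂ) (a j) - c j) ^ 2 * I_sq

lemma cexp_inner_add_inner_sub_sq_norm_div (α : ℝ) (a c z : EuclideanSpace ℂ ι) :
    cexp ((⟪a, z⟫_ℂ + ⟪z, c⟫_ℂ - ‖z‖ ^ 2) / α) =
      cexp (-(α⁻¹ : ℂ) * ‖z‖ ^ 2 + (α⁻¹ • innerAddInner a c) z) := by
  simp only [LinearMap.smul_apply, innerAddInner_apply, Complex.real_smul]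
  congr 1
  push_cast
  ring

variable [MeasurableSpace (EuclideanSpace ℂ ι)] [BorelSpace (EuclideanSpace ℂ ι)] {α : ℝ}

theorem integrable_cexp_inner_add_inner_sub_sq_norm_div (hα : 0 < α) (a c : EuclideanSpace ℂ ι) :
    Integrable fun z => cexp ((⟪a, z⟫_ℂ + ⟪z, c⟫_ℂ - ‖z‖ ^ 2) / α) := by
  simp only [cexp_inner_add_inner_sub_sq_norm_div]
  exact integrable_cexp_neg_mul_sq_norm_add_linearMap (by simpa using hα) _

theorem integral_cexp_inner_add_inner_sub_sq_norm_div (hα : 0 < α) (a c : EuclideanSpace ℂ ι) :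
    ∫ z, cexp ((⟪a, z⟫_ℂ + ⟪z, c⟫_ℂ - ‖z‖ ^ 2) / α) =
      (α * π) ^ Fintype.card ι * cexp (⟪a, c⟫_ℂ / α) := by
  simp only [cexp_inner_add_inner_sub_sq_norm_div]
  rw [integral_cexp_neg_mul_sq_norm_add_linearMap
    (Pi.orthonormalBasis fun _ : ι => orthonormalBasisOneI) (by simpa using hα)]
  simp only [LinearMap.smul_apply, Complex.real_smul, mul_pow,
    ← Finset.mul_sum, sum_innerAddInner_pi_orthonormalBasisOneI_sq]
  have hα' : (α : ℂ) ≠ 0 := ofReal_ne_zero.mpr hα.ne'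
  have hcard : (Fintype.card ((_ : ι) × Fin 2) / 2 : ℂ) = Fintype.card ι := by
    simp [Fintype.card_sigma]
  rw [hcard, cpow_natCast, div_inv_eq_mul, mul_comm (π : ℂ), mul_pow]
  congr 2
  push_cast
  field_simp

end FockGaussian

section Kph

variable {n : ℕ} {α : ℝ}

-- Mathlib's `⟪w, z⟫_ℂ` is conjugate-linear in `w`: it is the paper's `⟨z, w⟩`.
lemma Kph_eq_inner (z w : EuclideanSpace ℂ (Fin n)) :
    Kph n α z w = cexp (⟪w, z⟫_ℂ / α) + cexp (⟪z, w⟫_ℂ / α) - 1 := by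
  simp only [Kph, PiLp.inner_apply, RCLike.inner_apply]

lemma conj_Kph (z w : EuclideanSpace ℂ (Fin n)) : conj (Kph n α z w) = Kph n α z w := by
  rw [Kph_eq_inner, map_sub, map_add, map_one, ← exp_conj, ← exp_conj, map_div₀, map_div₀,
    conj_ofReal, inner_conj_symm, inner_conj_symm, add_comm (cexp _)]

lemma ofReal_norm_Kph_sq (z w : EuclideanSpace ℂ (Fin n)) :
    ((‖Kph n α z w‖ ^ 2 : ℝ) : ℂ) = Kph n α z w ^ 2 := by
  rw [ofReal_pow, ← mul_conj', conj_Kph, sq]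

lemma ofReal_norm_Kph_sq_mul_exp (u z : EuclideanSpace ℂ (Fin n)) :
    ((‖Kph n α z u‖ ^ 2 * Real.exp (-‖z‖ ^ 2 / α) : ℝ) : ℂ) =
      cexp ((⟪(2 : ℂ) • u, z⟫_ℂ + ⟪z, 0⟫_ℂ - ‖z‖ ^ 2) / α) +
        cexp ((⟪0, z⟫_ℂ + ⟪z, (2 : ℂ) • u⟫_ℂ - ‖z‖ ^ 2) / α) +
        2 * cexp ((⟪u, z⟫_ℂ + ⟪z, u⟫_ℂ - ‖z‖ ^ 2) / α) -
        2 * cexp ((⟪u, z⟫_ℂ + ⟪z, 0⟫_ℂ - ‖z‖ ^ 2) / α) -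
        2 * cexp ((⟪0, z⟫_ℂ + ⟪z, u⟫_ℂ - ‖z‖ ^ 2) / α) +
        cexp ((⟪0, z⟫_ℂ + ⟪z, 0⟫_ℂ - ‖z‖ ^ 2) / α) := by
  have hsplit : ∀ x y : ℂ, cexp ((x + y - ‖z‖ ^ 2) / α) =
      cexp (x / α) * cexp (y / α) * Real.exp (-‖z‖ ^ 2 / α) := fun x y => by
    push_cast
    rw [← exp_add, ← exp_add]
    ring_nf
  have hdouble : ∀ x : ℂ, cexp (2 * x / α) = cexp (x / α) ^ 2 := fun x => by
    rw [← exp_nat_mul]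
    push_cast
    ring_nf
  simp only [hsplit, inner_smul_left, inner_smul_right, inner_zero_left, inner_zero_right,
    map_ofNat, hdouble, zero_div, exp_zero]
  rw [ofReal_mul, ofReal_norm_Kph_sq, Kph_eq_inner]
  ring

lemma integral_norm_Kph_sq_mul_exp (hα : 0 < α) (u : EuclideanSpace ℂ (Fin n)) :
    ∫ z, ‖Kph n α z u‖ ^ 2 * Real.exp (-‖z‖ ^ 2 / α) =
      (α * π) ^ n * (2 * Real.exp (‖u‖ ^ 2 / α) - 1) := by
  have hintegrable := integrable_cexp_inner_add_inner_sub_sq_norm_div (ι := Fin n) hα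
  apply ofReal_injective
  rw [← integral_complex_ofReal]
  simp only [ofReal_norm_Kph_sq_mul_exp]
  rw [integral_add, integral_sub, integral_sub, integral_add, integral_add, integral_const_mul,
    integral_const_mul, integral_const_mul]
  · simp only [integral_cexp_inner_add_inner_sub_sq_norm_div hα]
    simp only [inner_zero_left, inner_zero_right, zero_div, exp_zero, Fintype.card_fin]
    rw [inner_self_eq_norm_sq_to_K, RCLike.ofReal_eq_complex_ofReal]
    push_cast
    ring
  all_goals fun_prop

end Kph

theorem kernelSelfIntegral_general (n : ℕ) (α : ℝ) (hα : 0 < α)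
    (u : EuclideanSpace ℂ (Fin n)) :
    (1 / (α * π) ^ n) * (∫ z, ‖Kph n α z u‖ ^ 2 * Real.exp (-‖z‖ ^ 2 / α)) =
        2 * Real.exp (‖u‖ ^ 2 / α) - 1 ∧
      Kph n α u u = ((2 * Real.exp (‖u‖ ^ 2 / α) - 1 : ℝ) : ℂ) := by
  refine ⟨?_, ?_⟩
  · rw [integral_norm_Kph_sq_mul_exp hα]
    field_simp
  · rw [Kph_eq_inner, inner_self_eq_norm_sq_to_K, RCLike.ofReal_eq_complex_ofReal]
    push_cast
    ring

/-- For every `u ∈ ℂⁿ`,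
`(1/(απ)^n) ∫_{ℂⁿ} |K_{ph,α}(z,u)|² e^{-|z|²/α} dA(z) = K_{ph,α}(u,u) = 2 e^{|u|²/α} − 1`. -/
theorem kernelSelfIntegral (n : ℕ) (hn : 0 < n) (α : ℝ) (hα : 0 < α)
    (u : EuclideanSpace ℂ (Fin n)) :
    (1 / (α * π) ^ n) * (∫ z, ‖Kph n α z u‖ ^ 2 * Real.exp (-‖z‖ ^ 2 / α)) =
        2 * Real.exp (‖u‖ ^ 2 / α) - 1 ∧
      Kph n α u u = ((2 * Real.exp (‖u‖ ^ 2 / α) - 1 : ℝ) : ℂ) :=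
  kernelSelfIntegral_general n α hα u
end

section
/- Let α > 0 and let μ be a positive Borel measure on ℂⁿ that is radial, i.e. invariant under every ℝ-linear isometry of ℂⁿ ≅ ℝ^{2n}, and satisfies ∫_{ℂⁿ} e^{-|w|²/α} dμ(w) < ∞. Let h : ℂⁿ → ℂ be entire with h(0) = 0, and let z ∈ ℂⁿ be such that ∫_{ℂⁿ} |exp(⟨z,w⟩/α) conj(h(w))| e^{-|w|²/α} dμ(w) < ∞. Then ∫_{ℂⁿ} exp(⟨z,w⟩/α) conj(h(w)) e^{-|w|²/α} dμ(w) = 0. (Consequently, for radial μ the operator T_{M,μ} P_N is the zero operator.) -/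
open MeasureTheory Metric Complex Filter
open scoped ENNReal Real

/-- A positive Borel measure `μ` on `ℂⁿ` is radial if it is invariant under every
`ℝ`-linear isometry of `ℂⁿ ≅ ℝ^{2n}`. -/
def IsRadial {n : ℕ} (μ : Measure (EuclideanSpace ℂ (Fin n))) : Prop :=
  ∀ (U : EuclideanSpace ℂ (Fin n) ≃ₗᵢ[ℝ] EuclideanSpace ℂ (Fin n))
    (E : Set (EuclideanSpace ℂ (Fin n))), MeasurableSet E → μ (U ⁻¹' E) = μ E

/-!
Average over the circle action `w ↦ e^{iθ} w`. The conjugate of the integrand is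
`e^{-|w|²/α} G(w)` with `G(w) = exp(⟨w, z⟩/α) h(w)` entire and `G(0) = 0`; the weight is constant
on the circles `{e^{iθ} w}`, so the circle averages vanish by the mean value property applied to
`λ ↦ G(λ w)`. A rotation-invariant measure does not see this averaging: Fubini, applied through
the measure-preserving skew product `(θ, w) ↦ (θ, e^{iθ} w)` (legitimate because the finite
Gaussian integral makes `μ` σ-finite), turns the vanishing averages into a vanishing integral.
-/

open scoped InnerProductSpace ComplexConjugate

lemma sigmaFinite_of_lintegral_ne_top {X : Type*} [MeasurableSpace X] {μ : Measure X}
    {g : X → ℝ≥0∞} (hg : AEMeasurable g μ) (hg0 : ∀ᵐ x ∂μ, g x ≠ 0)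
    (hfin : ∫⁻ x, g x ∂μ ≠ ∞) : SigmaFinite μ := by
  have := isFiniteMeasure_withDensity hfin
  rw [← withDensity_inv_same₀ hg hg0 (ae_lt_top' hg hfin |>.mono fun _ => LT.lt.ne)]
  exact SigmaFinite.withDensity_of_ne_top
    ((withDensity_absolutelyContinuous μ g).ae_le (hg0.mono fun _ => ENNReal.inv_ne_top.mpr))

lemma IsRadial.map_smul_eq {n : ℕ} {μ : Measure (EuclideanSpace ℂ (Fin n))}
    (hμ : IsRadial μ) {c : ℂ} (hc : ‖c‖ = 1) : μ.map (c • ·) = μ := by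
  let U : EuclideanSpace ℂ (Fin n) ≃ₗᵢ[ℝ] EuclideanSpace ℂ (Fin n) :=
    { (LinearEquiv.smulOfNeZero ℂ _ c (by rintro rfl; simp at hc)).restrictScalars ℝ with
      norm_map' := fun w => by simp [norm_smul, hc] }
  ext E hE
  rw [Measure.map_apply (measurable_const_smul c) hE]
  exact hμ U E hE

section CircleAction

variable {E F : Type*} [NormedAddCommGroup E] [NormedSpace ℂ E]

theorem Differentiable.circleAverage_comp_smul [NormedAddCommGroup F] [NormedSpace ℂ F]
    [CompleteSpace F] {G : E → F} (hG : Differentiable ℂ G) (w : E) :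
    Real.circleAverage (fun c : ℂ => G (c • w)) 0 1 = G 0 := by
  have := (hG.comp (differentiable_id.smul_const w)).diffContOnCl (s := ball (0 : ℂ) |1|)
  simpa [Function.comp_def] using this.circleAverage

variable [MeasurableSpace E] [BorelSpace E] [SecondCountableTopology E]
  {μ : Measure E} [SFinite μ] [NormedAddCommGroup F]

theorem integral_eq_integral_circleAverage [NormedSpace ℝ F]
    (hμ : ∀ c : ℂ, ‖c‖ = 1 → μ.map (c • ·) = μ) {f : E → F} (hf : Integrable f μ) :
    ∫ w, f w ∂μ = ∫ w, Real.circleAverage (fun c => f (c • w)) 0 1 ∂μ := by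
  set ν : Measure ℝ := volume.restrict (Set.Ioc 0 (2 * π))
  have hΦ : MeasurePreserving (fun p : ℝ × E => (p.1, circleMap 0 1 p.1 • p.2))
      (ν.prod μ) (ν.prod μ) :=
    (MeasurePreserving.id ν).skew_product (by fun_prop)
      (ae_of_all _ fun θ => hμ _ (by simp))
  have hf_snd : Integrable (fun p : ℝ × E => f p.2) (ν.prod μ) := hf.comp_snd ν
  have hf_rot : Integrable (fun p : ℝ × E => f (circleMap 0 1 p.1 • p.2)) (ν.prod μ) :=
    (hΦ.integrable_comp hf_snd.aestronglyMeasurable).mpr hf_snd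
  have hν : ν.real Set.univ = 2 * π := by simp [ν, measureReal_def, Real.pi_pos.le]
  have key : ν.real Set.univ • ∫ w, f w ∂μ
      = ∫ w, (∫ θ in 0..2 * π, f (circleMap 0 1 θ • w)) ∂μ := by
    rw [← integral_fun_snd, ← hΦ.map_eq, integral_map hΦ.measurable.aemeasurable
      (by rw [hΦ.map_eq]; exact hf_snd.aestronglyMeasurable), integral_prod_symm _ hf_rot]
    simp only [intervalIntegral.integral_of_le Real.two_pi_pos.le, ν]
  simp only [Real.circleAverage_def, integral_smul, ← key, hν, smul_smul]
  rw [inv_mul_cancel₀ Real.two_pi_pos.ne', one_smul]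

theorem integral_radial_smul_eq_zero [NormedSpace ℂ F] [CompleteSpace F]
    (hμ : ∀ c : ℂ, ‖c‖ = 1 → μ.map (c • ·) = μ) {ρ : ℝ → ℝ} {G : E → F}
    (hG : Differentiable ℂ G) (hG0 : G 0 = 0) (hint : Integrable (fun w => ρ ‖w‖ • G w) μ) :
    ∫ w, ρ ‖w‖ • G w ∂μ = 0 := by
  rw [integral_eq_integral_circleAverage hμ hint]
  refine integral_eq_zero_of_ae (ae_of_all _ fun w => ?_)
  calc Real.circleAverage (fun c : ℂ => ρ ‖c • w‖ • G (c • w)) 0 1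
      = Real.circleAverage (fun c : ℂ => ρ ‖w‖ • G (c • w)) 0 1 :=
        Real.circleAverage_congr_sphere fun c hc => by
          rw [mem_sphere_zero_iff_norm, abs_one] at hc
          simp only [norm_smul, hc, one_mul]
    _ = 0 := by
      rw [Real.circleAverage_fun_smul, hG.circleAverage_comp_smul, hG0, smul_zero]

end CircleAction

theorem radialMeasureOrthogonality_general (n : ℕ) (α : ℝ)
    (μ : Measure (EuclideanSpace ℂ (Fin n))) (hrad : IsRadial μ)
    (hfin : (∫⁻ w, ENNReal.ofReal (Real.exp (-‖w‖ ^ 2 / α)) ∂μ) < ⊤)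
    (h : EuclideanSpace ℂ (Fin n) → ℂ) (hent : Differentiable ℂ h) (h0 : h 0 = 0)
    (z : EuclideanSpace ℂ (Fin n))
    (hint : (∫⁻ w, ENNReal.ofReal
        (‖Complex.exp ((∑ j, z j * (starRingEnd ℂ) (w j)) / (α : ℂ)) *
            (starRingEnd ℂ) (h w)‖ * Real.exp (-‖w‖ ^ 2 / α)) ∂μ) < ⊤) :
    (∫ w, Complex.exp ((∑ j, z j * (starRingEnd ℂ) (w j)) / (α : ℂ)) *
        (starRingEnd ℂ) (h w) * (Real.exp (-‖w‖ ^ 2 / α) : ℂ) ∂μ) = 0 := by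
  have : SigmaFinite μ := sigmaFinite_of_lintegral_ne_top (by fun_prop)
    (ae_of_all _ fun _ => by positivity) hfin.ne
  set G : EuclideanSpace ℂ (Fin n) → ℂ := fun w => Complex.exp (⟪z, w⟫_ℂ / α) * h w
  have hinner : Differentiable ℂ fun w => ⟪z, w⟫_ℂ := (innerSL ℂ z).differentiable
  have hG : Differentiable ℂ G := by unfold G; fun_prop
  have hconj : ∀ w, Complex.exp ((∑ j, z j * conj (w j)) / (α : ℂ)) * conj (h w) *
      (Real.exp (-‖w‖ ^ 2 / α) : ℂ) = conj (Real.exp (-‖w‖ ^ 2 / α) • G w) := by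
    intro w
    simp [G, Complex.real_smul, ← Complex.exp_conj, PiLp.inner_apply, map_sum, mul_comm]
  have hint' : Integrable (fun w => Real.exp (-‖w‖ ^ 2 / α) • G w) μ := by
    refine ⟨((by fun_prop : Continuous fun w : EuclideanSpace ℂ (Fin n) =>
      Real.exp (-‖w‖ ^ 2 / α)).smul hG.continuous).aestronglyMeasurable, ?_⟩
    rw [hasFiniteIntegral_iff_norm]
    convert hint using 4 with w
    rw [← RCLike.norm_conj, ← hconj, norm_mul, Complex.norm_real, Real.norm_of_nonneg
      (Real.exp_pos _).le]
  simp_rw [hconj, integral_conj]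
  rw [integral_radial_smul_eq_zero (ρ := fun r => Real.exp (-r ^ 2 / α))
    (fun _ => hrad.map_smul_eq) hG (by simp [G, h0]) hint', map_zero]

/-- Let `μ` be a radial positive Borel measure on `ℂⁿ` with
`∫ e^{-|w|²/α} dμ(w) < ∞`, let `h : ℂⁿ → ℂ` be entire with `h(0) = 0`, and let `z ∈ ℂⁿ` be
such that `∫ |exp(⟨z,w⟩/α) conj(h(w))| e^{-|w|²/α} dμ(w) < ∞`. Then
`∫ exp(⟨z,w⟩/α) conj(h(w)) e^{-|w|²/α} dμ(w) = 0`. -/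
theorem radialMeasureOrthogonality (n : ℕ) (hn : 0 < n) (α : ℝ) (hα : 0 < α)
    (μ : Measure (EuclideanSpace ℂ (Fin n))) (hrad : IsRadial μ)
    (hfin : (∫⁻ w, ENNReal.ofReal (Real.exp (-‖w‖ ^ 2 / α)) ∂μ) < ⊤)
    (h : EuclideanSpace ℂ (Fin n) → ℂ) (hent : Differentiable ℂ h) (h0 : h 0 = 0)
    (z : EuclideanSpace ℂ (Fin n))
    (hint : (∫⁻ w, ENNReal.ofReal
        (‖Complex.exp ((∑ j, z j * (starRingEnd ℂ) (w j)) / (α : ℂ)) *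
            (starRingEnd ℂ) (h w)‖ * Real.exp (-‖w‖ ^ 2 / α)) ∂μ) < ⊤) :
    (∫ w, Complex.exp ((∑ j, z j * (starRingEnd ℂ) (w j)) / (α : ℂ)) *
        (starRingEnd ℂ) (h w) * (Real.exp (-‖w‖ ^ 2 / α) : ℂ) ∂μ) = 0 :=
  radialMeasureOrthogonality_general n α μ hrad hfin h hent h0 z hint
end
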